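/- arXiv:1207.1017 — 2 statements merged into one kernel-verified Lean document; each statement's English description precedes it below -/
import Mathlib

section
/- Let φ ∈ L^p(ℝ³,ℝ) for some 3 ≤ p < ∞, and let D_φ = -iσ·∇ + i(m+gφ) on H¹(ℝ³,ℂ²). Then dim ker(D_φ* D_φ) = dim ker(D_φ D_φ*). Concretely, the map sending ω = (u,v)ᵀ ∈ ker(D_φ* D_φ) to ω̃ = (v̄, -ū)ᵀ defines an antilinear bijection between ker(D_φ* D_φ) and ker(D_φ D_φ*). -/
open MeasureTheory ENNReal NNReal

noncomputable section

abbrev R3 : Type := EuclideanSpace ℝ (Fin 3)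
abbrev C2 : Type := EuclideanSpace ℂ (Fin 2)

def pauli : Fin 3 → Matrix (Fin 2) (Fin 2) ℂ
  | 0 => !![0, 1; 1, 0]
  | 1 => !![0, -Complex.I; Complex.I, 0]
  | 2 => !![1, 0; 0, -1]

def matApply (A : Matrix (Fin 2) (Fin 2) ℂ) (v : C2) : C2 :=
  WithLp.toLp 2 (fun i => ∑ j, A i j * v j)

def sigmaGrad (ω : R3 → C2) (x : R3) : C2 :=
  ∑ k : Fin 3, matApply (pauli k) (fderiv ℝ ω x (EuclideanSpace.single k 1))

def MemH1 (ω : R3 → C2) : Prop :=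
  Differentiable ℝ ω ∧ MemLp ω 2 volume ∧ MemLp (fun x => fderiv ℝ ω x) 2 volume

def Dop (m g : ℝ) (φ : R3 → ℝ) (ω : R3 → C2) (x : R3) : C2 :=
  (-Complex.I) • sigmaGrad ω x + (Complex.I * ((m : ℂ) + (g : ℂ) * (φ x : ℂ))) • ω x

def DopStar (m g : ℝ) (φ : R3 → ℝ) (ω : R3 → C2) (x : R3) : C2 :=
  (-Complex.I) • sigmaGrad ω x - (Complex.I * ((m : ℂ) + (g : ℂ) * (φ x : ℂ))) • ω x

/-- The antilinear map `(u,v)ᵀ ↦ (v̄, -ū)ᵀ` applied pointwise. -/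
def conjFlip (ω : R3 → C2) : R3 → C2 :=
  fun x => WithLp.toLp 2 ![(starRingEnd ℂ) (ω x 1), -((starRingEnd ℂ) (ω x 0))]

/-- The kernel of `D_φ* D_φ` (inside `H¹`). -/
def kerDstarD (m g : ℝ) (φ : R3 → ℝ) : Set (R3 → C2) :=
  {ω | MemH1 ω ∧ MemH1 (Dop m g φ ω) ∧ ∀ x, DopStar m g φ (Dop m g φ ω) x = 0}

/-- The kernel of `D_φ D_φ*` (inside `H¹`). -/
def kerDDstar (m g : ℝ) (φ : R3 → ℝ) : Set (R3 → C2) :=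
  {ω | MemH1 ω ∧ MemH1 (DopStar m g φ ω) ∧ ∀ x, Dop m g φ (DopStar m g φ ω) x = 0}

/-!
Write `J` for the pointwise map `(u, v) ↦ (v̄, -ū)`. It is real-linear, complex-antilinear, satisfies
`J² = -1`, and anticommutes with each Pauli matrix. Hence `J (-iσ·∇ω) = -iσ·∇(Jω)` while
`J (i(m+gφ)ω) = -i(m+gφ) Jω`, i.e. `J D_φ = D_φ* J` and `J D_φ* = D_φ J`. So `J` maps
`ker(D_φ* D_φ)` into `ker(D_φ D_φ*)` and back, and `J⁴ = 1` makes it a bijection.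
-/

open ComplexConjugate

def flipConj : C2 →L[ℝ] C2 := LinearMap.toContinuousLinearMap
  { toFun := fun v => WithLp.toLp 2 ![conj (v 1), -conj (v 0)]
    map_add' := fun u v => by
      ext i; fin_cases i <;> simp [add_comm]
    map_smul' := fun r v => by
      ext i; fin_cases i <;> simp [Complex.real_smul] }

lemma flipConj_apply (v : C2) : flipConj v = WithLp.toLp 2 ![conj (v 1), -conj (v 0)] := rfl

lemma flipConj_smul (c : ℂ) (v : C2) : flipConj (c • v) = conj c • flipConj v := by
  ext i; fin_cases i <;> simp [flipConj_apply]

lemma flipConj_flipConj (v : C2) : flipConj (flipConj v) = -v := by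
  ext i; fin_cases i <;> simp [flipConj_apply]

lemma matApply_pauli_flipConj (k : Fin 3) (v : C2) :
    matApply (pauli k) (flipConj v) = -flipConj (matApply (pauli k) v) := by
  fin_cases k <;> ext i <;> fin_cases i <;>
    simp [matApply, pauli, flipConj_apply, Fin.sum_univ_two]

lemma conjFlip_eq_comp (ω : R3 → C2) : conjFlip ω = flipConj ∘ ω := rfl

lemma conjFlip_conjFlip (ω : R3 → C2) : conjFlip (conjFlip ω) = -ω :=
  funext fun x => flipConj_flipConj (ω x)

lemma conjFlip_injective : Function.Injective conjFlip := fun ω ω' h => by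
  simpa [conjFlip_conjFlip] using congrArg conjFlip h

lemma fderiv_conjFlip {ω : R3 → C2} (hω : Differentiable ℝ ω) (x : R3) :
    fderiv ℝ (conjFlip ω) x = flipConj.comp (fderiv ℝ ω x) :=
  (flipConj.hasFDerivAt.comp x (hω x).hasFDerivAt).fderiv

lemma sigmaGrad_conjFlip {ω : R3 → C2} (hω : Differentiable ℝ ω) (x : R3) :
    sigmaGrad (conjFlip ω) x = -flipConj (sigmaGrad ω x) := by
  simp only [sigmaGrad, fderiv_conjFlip hω, ContinuousLinearMap.comp_apply,
    matApply_pauli_flipConj, map_sum, Finset.sum_neg_distrib]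

lemma MemH1.conjFlip {ω : R3 → C2} (h : MemH1 ω) : MemH1 (conjFlip ω) := by
  obtain ⟨hdiff, hL2, hderivL2⟩ := h
  refine ⟨flipConj.differentiable.comp hdiff, flipConj.comp_memLp' hL2, ?_⟩
  simp only [fderiv_conjFlip hdiff]
  exact (ContinuousLinearMap.compL ℝ R3 C2 C2 flipConj).comp_memLp' hderivL2

section Intertwining

variable {m g : ℝ} {φ : R3 → ℝ} {ω : R3 → C2}

lemma conj_I_mul_mass (x : R3) :
    conj (Complex.I * ((m : ℂ) + (g : ℂ) * (φ x : ℂ))) =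
      -(Complex.I * ((m : ℂ) + (g : ℂ) * (φ x : ℂ))) := by
  simp [Complex.conj_ofReal]

lemma DopStar_conjFlip (hω : Differentiable ℝ ω) :
    DopStar m g φ (conjFlip ω) = conjFlip (Dop m g φ ω) := by
  funext x
  change _ - _ • flipConj (ω x) = flipConj (Dop m g φ ω x)
  rw [Dop, sigmaGrad_conjFlip hω, map_add, flipConj_smul, flipConj_smul, Complex.conj_neg_I,
    conj_I_mul_mass]
  module

lemma Dop_conjFlip (hω : Differentiable ℝ ω) :
    Dop m g φ (conjFlip ω) = conjFlip (DopStar m g φ ω) := by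
  funext x
  change _ + _ • flipConj (ω x) = flipConj (DopStar m g φ ω x)
  rw [DopStar, sigmaGrad_conjFlip hω, map_sub, flipConj_smul, flipConj_smul, Complex.conj_neg_I,
    conj_I_mul_mass]
  module

lemma conjFlip_mem_kerDDstar (h : ω ∈ kerDstarD m g φ) : conjFlip ω ∈ kerDDstar m g φ := by
  obtain ⟨hω, hDω, hker⟩ := h
  refine ⟨hω.conjFlip, DopStar_conjFlip hω.1 ▸ hDω.conjFlip, fun x => ?_⟩
  rw [DopStar_conjFlip hω.1, Dop_conjFlip hDω.1, conjFlip_eq_comp, Function.comp_apply, hker,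
    map_zero]

lemma conjFlip_mem_kerDstarD (h : ω ∈ kerDDstar m g φ) : conjFlip ω ∈ kerDstarD m g φ := by
  obtain ⟨hω, hDω, hker⟩ := h
  refine ⟨hω.conjFlip, Dop_conjFlip hω.1 ▸ hDω.conjFlip, fun x => ?_⟩
  rw [Dop_conjFlip hω.1, DopStar_conjFlip hDω.1, conjFlip_eq_comp, Function.comp_apply, hker,
    map_zero]

end Intertwining

theorem dim_ker_DstarD_eq_dim_ker_DDstar_general
    (m g : ℝ)
    (φ : R3 → ℝ) :
    Set.BijOn conjFlip (kerDstarD m g φ) (kerDDstar m g φ) ∧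
    (∀ ω ω' : R3 → C2, conjFlip (ω + ω') = conjFlip ω + conjFlip ω') ∧
    (∀ (c : ℂ) (ω : R3 → C2), conjFlip (c • ω) = (starRingEnd ℂ c) • conjFlip ω) := by
  refine ⟨⟨fun ω => conjFlip_mem_kerDDstar, conjFlip_injective.injOn, fun η hη => ?_⟩,
    fun ω ω' => funext fun x => map_add flipConj (ω x) (ω' x),
    fun c ω => funext fun x => flipConj_smul c (ω x)⟩
  refine ⟨conjFlip (conjFlip (conjFlip η)), ?_, by simp only [conjFlip_conjFlip, neg_neg]⟩
  exact conjFlip_mem_kerDstarD (conjFlip_mem_kerDDstar (conjFlip_mem_kerDstarD hη))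

/-- the map `ω = (u,v)ᵀ ↦ ω̃ = (v̄, -ū)ᵀ` is an antilinear bijection between
`ker(D_φ* D_φ)` and `ker(D_φ D_φ*)`; in particular the two kernels have the same dimension. -/
theorem dim_ker_DstarD_eq_dim_ker_DDstar
    (m g : ℝ) (hm : 0 < m) (hg : 0 < g)
    (p : ℝ≥0∞) (hp1 : 3 ≤ p) (hp2 : p ≠ ⊤)
    (φ : R3 → ℝ) (hφ : MemLp φ p volume) :
    Set.BijOn conjFlip (kerDstarD m g φ) (kerDDstar m g φ) ∧
    (∀ ω ω' : R3 → C2, conjFlip (ω + ω') = conjFlip ω + conjFlip ω') ∧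
    (∀ (c : ℂ) (ω : R3 → C2), conjFlip (c • ω) = (starRingEnd ℂ c) • conjFlip ω) :=
  dim_ker_DstarD_eq_dim_ker_DDstar_general m g φ
end
end

section
/- Let ω ∈ H¹(ℝ³,ℂ²) be of the symmetric form ω(x) = v(r)(1,0)ᵀ + u(r)(cos θ, sin θ e^{iφ})ᵀ in spherical coordinates, with support considerations on the ball B(0,R). Then ‖σ·∇ω‖²_{L²(B(0,R))} ≥ ‖∇ω‖²_{L²(B(0,R))}. Equivalently, in radial form: 4π∫₀ᴿ [|u'(r)+2u(r)/r|² + |v'(r)|²] r² dr ≥ 4π∫₀ᴿ [|u'(r)|² + 2|u(r)|²/r² + |v'(r)|²] r² dr. -/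
open MeasureTheory ENNReal NNReal

noncomputable section

/-!
Expanding `|σ·∇ω|² = |Σₖ σₖ ∂ₖω|²` with the Pauli relations, the difference
`|σ·∇ω|² - Σₖ |∂ₖω|²` for the symmetric ansatz is, at `x ≠ 0` with `r = ‖x‖`,
`(2|u|² + 4r⟨u, u'⟩ + 4⟨v', u⟩ x₃) / r²`. The term in `x₃` is odd and drops out after averaging
`x` with `-x`; in polar coordinates the rest becomes `4π ∫₀ᴿ (2|u|² + 4s⟨u, u'⟩) ds`, and
`2|u|² + 4s⟨u, u'⟩ = (2s|u|²)'`, so this integral is `8πR|u(R)|² ≥ 0`. Differentiable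
profiles are obtained by reading `u` and `v` off the components of `ω` along the positive
`x₁`-axis.
-/

open Complex Set Metric

def spinUp : C2 := EuclideanSpace.single 0 1

/-- `sigmaUp x = (σ·x) (1, 0)ᵀ = (x₃, x₁ + x₂ i) = r (cos θ, sin θ e^{iφ})ᵀ`. -/
def sigmaUp : R3 →L[ℝ] C2 :=
  ∑ k : Fin 3, (EuclideanSpace.proj k : R3 →L[ℝ] ℝ).smulRight (matApply (pauli k) spinUp)

def sigmaDot (L : R3 →L[ℝ] C2) : C2 :=
  ∑ k : Fin 3, matApply (pauli k) (L (EuclideanSpace.single k 1))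

lemma sigmaUp_apply_zero (x : R3) : sigmaUp x 0 = x 2 := by
  simp [sigmaUp, matApply, pauli, spinUp, Fin.sum_univ_three]

lemma sigmaUp_apply_one (x : R3) : sigmaUp x 1 = x 0 + x 1 * I := by
  simp [sigmaUp, matApply, pauli, spinUp, Fin.sum_univ_three]

lemma sigmaDot_apply_zero (L : R3 →L[ℝ] C2) :
    sigmaDot L 0 = L (EuclideanSpace.single 0 1) 1 - I * L (EuclideanSpace.single 1 1) 1
      + L (EuclideanSpace.single 2 1) 0 := by
  simp [sigmaDot, matApply, pauli, Fin.sum_univ_three, sub_eq_add_neg]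

lemma sigmaDot_apply_one (L : R3 →L[ℝ] C2) :
    sigmaDot L 1 = L (EuclideanSpace.single 0 1) 0 + I * L (EuclideanSpace.single 1 1) 0
      - L (EuclideanSpace.single 2 1) 1 := by
  simp [sigmaDot, matApply, pauli, Fin.sum_univ_three, sub_eq_add_neg]

lemma C2.norm_sq_eq (z : C2) : ‖z‖ ^ 2 = normSq (z 0) + normSq (z 1) := by
  simp [EuclideanSpace.norm_sq_eq, Fin.sum_univ_two, Complex.sq_norm]

lemma C2.inner_eq (z w : C2) :
    inner ℂ z w = starRingEnd ℂ (z 0) * w 0 + starRingEnd ℂ (z 1) * w 1 := by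
  simp [PiLp.inner_apply, Fin.sum_univ_two, mul_comm]

lemma norm_sigmaUp (x : R3) : ‖sigmaUp x‖ = ‖x‖ := by
  have h : ‖sigmaUp x‖ ^ 2 = ‖x‖ ^ 2 := by
    rw [C2.norm_sq_eq, sigmaUp_apply_zero, sigmaUp_apply_one, EuclideanSpace.norm_sq_eq]
    simp only [normSq_apply, ofReal_re, ofReal_im, mul_zero, add_zero, add_re, mul_re, I_re,
      zero_mul, I_im, sub_self, add_im, mul_im, zero_add, Real.norm_eq_abs, sq_abs,
      Fin.sum_univ_three]
    ring
  exact (pow_left_inj₀ (norm_nonneg _) (norm_nonneg _) two_ne_zero).mp h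

lemma inner_spinUp_sigmaUp (x : R3) : inner ℂ spinUp (sigmaUp x) = x 2 := by
  simp [C2.inner_eq, spinUp, sigmaUp_apply_zero]

/-- Since `σ·n` is self-adjoint with `(σ·n)² = ‖n‖²` and `Σₖ σₖ (sigmaUp eₖ) = 3 spinUp`, the
terms quadratic in `W` cancel. -/
lemma norm_sigmaDot_sq_sub_sum_norm_sq {L : R3 →L[ℝ] C2} {n : R3} {W : C2} {C : ℂ}
    (hL : L = (innerSL ℝ n).smulRight W + C • sigmaUp) :
    ‖sigmaDot L‖ ^ 2 - ∑ k, ‖L (EuclideanSpace.single k 1)‖ ^ 2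
      = 4 * (inner ℂ W (C • sigmaUp n)).re + 6 * ‖C‖ ^ 2 := by
  have hLe : ∀ k j, L (EuclideanSpace.single k 1) j
      = n k * W j + C * sigmaUp (EuclideanSpace.single k 1) j := by
    intro k j
    simp [hL, Complex.real_smul, EuclideanSpace.inner_single_right]
  simp only [C2.norm_sq_eq, C2.inner_eq, sigmaDot_apply_zero, sigmaDot_apply_one,
    Fin.sum_univ_three, hLe, PiLp.smul_apply, smul_eq_mul, sigmaUp_apply_zero, sigmaUp_apply_one,
    Complex.sq_norm]
  simp only [PiLp.single_eq_same, PiLp.single_eq_of_ne, ne_eq, Fin.reduceEq, not_false_eq_true,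
    Complex.ofReal_one, Complex.ofReal_zero, normSq_apply, mul_re, mul_im, add_re, add_im, sub_re,
    sub_im, conj_re, conj_im, I_re, I_im, ofReal_re, ofReal_im, one_re, one_im, zero_re, zero_im]
  ring

lemma hasFDerivAt_norm {F : Type*} [NormedAddCommGroup F] [InnerProductSpace ℝ F] {x : F}
    (hx : x ≠ 0) : HasFDerivAt (‖·‖) (innerSL ℝ (‖x‖⁻¹ • x)) x := by
  have hsqrt := (Real.hasDerivAt_sqrt (pow_ne_zero 2 (norm_ne_zero_iff.mpr hx))).comp_hasFDerivAt
    x (hasStrictFDerivAt_norm_sq x).hasFDerivAt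
  simp only [Function.comp_def, Real.sqrt_sq (norm_nonneg _)] at hsqrt
  refine hsqrt.congr_fderiv ?_
  ext y
  simp only [one_div, mul_inv_rev, smul_apply, coe_innerSL_apply, nsmul_eq_mul, Nat.cast_ofNat,
    smul_eq_mul, map_smul]
  field_simp

/-- The paper's `v(r) (1, 0)ᵀ + u(r) (cos θ, sin θ e^{iφ})ᵀ`. -/
def symmetricSpinor (u v : ℝ → ℂ) (x : R3) : C2 :=
  v ‖x‖ • spinUp + (u ‖x‖ / ‖x‖) • sigmaUp x

lemma symmetricSpinor_apply_zero (u v : ℝ → ℂ) (x : R3) :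
    symmetricSpinor u v x 0 = v ‖x‖ + u ‖x‖ * (x 2 / ‖x‖) := by
  simp only [symmetricSpinor, spinUp, PiLp.add_apply, PiLp.smul_apply, PiLp.single_eq_same,
    smul_eq_mul, mul_one, sigmaUp_apply_zero, _root_.add_right_inj]
  ring

lemma symmetricSpinor_apply_one (u v : ℝ → ℂ) (x : R3) :
    symmetricSpinor u v x 1 = u ‖x‖ * ((x 0 + I * x 1) / ‖x‖) := by
  simp only [symmetricSpinor, spinUp, PiLp.add_apply, PiLp.smul_apply, ne_eq, one_ne_zero,
    not_false_eq_true, PiLp.single_eq_of_ne, smul_eq_mul, mul_zero, sigmaUp_apply_one, zero_add]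
  ring

lemma eq_symmetricSpinor_ray {ω : R3 → C2} {u v : ℝ → ℂ}
    (hω : ∀ x ≠ 0, ω x = symmetricSpinor u v x) :
    ∀ x ≠ 0, ω x = symmetricSpinor (fun s => ω (s • EuclideanSpace.single 0 1) 1)
      (fun s => ω (s • EuclideanSpace.single 0 1) 0) x := by
  intro x hx
  have hr : ‖x‖ ≠ 0 := norm_ne_zero_iff.mpr hx
  have hray := hω (‖x‖ • EuclideanSpace.single 0 1) (by simp [hr])
  rw [hω x hx]
  ext j
  fin_cases j <;> simp [symmetricSpinor_apply_zero, symmetricSpinor_apply_one, hray, norm_smul, hr]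

lemma hasFDerivAt_symmetricSpinor {u v : ℝ → ℂ} {x : R3} (hx : x ≠ 0)
    (hu : DifferentiableAt ℝ u ‖x‖) (hv : DifferentiableAt ℝ v ‖x‖) :
    HasFDerivAt (symmetricSpinor u v)
      ((innerSL ℝ (‖x‖⁻¹ • x)).smulRight
          (deriv v ‖x‖ • spinUp + (deriv u ‖x‖ - u ‖x‖ / ‖x‖) • sigmaUp (‖x‖⁻¹ • x))
        + (u ‖x‖ / ‖x‖) • sigmaUp) x := by
  have hr : (‖x‖ : ℂ) ≠ 0 := by exact_mod_cast norm_ne_zero_iff.mpr hx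
  have hN := hasFDerivAt_norm hx
  have hdiv : HasDerivAt (fun s : ℝ => u s / s) ((deriv u ‖x‖ - u ‖x‖ / ‖x‖) / ‖x‖) ‖x‖ := by
    have hs : HasDerivAt (fun s : ℝ => (s : ℂ)) 1 ‖x‖ := by
      simpa using (hasDerivAt_id (‖x‖ : ℝ)).ofReal_comp
    refine (hu.hasDerivAt.div hs hr).congr_deriv ?_
    field_simp
  refine (((hv.hasDerivAt.hasFDerivAt.comp x hN).smul_const spinUp).add
    ((hdiv.hasFDerivAt.comp x hN).smul sigmaUp.hasFDerivAt)).congr_fderiv ?_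
  ext h
  simp
  ring

/-- `radialDensity u s = (2 s ‖u s‖²)' = |u' + 2u/s|² s² - |u'|² s² - 2|u|²`. -/
def radialDensity (u : ℝ → ℂ) (s : ℝ) : ℝ :=
  2 * ‖u s‖ ^ 2 + 4 * s * inner ℝ (u s) (deriv u s)

lemma norm_sigmaGrad_sq_sub_sum_norm_sq {ω : R3 → C2} {u v : ℝ → ℂ} {x : R3}
    (hx : x ≠ 0) (hu : DifferentiableAt ℝ u ‖x‖) (hv : DifferentiableAt ℝ v ‖x‖)
    (hω : ∀ y ≠ 0, ω y = symmetricSpinor u v y) :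
    ‖sigmaGrad ω x‖ ^ 2 - ∑ k, ‖fderiv ℝ ω x (EuclideanSpace.single k 1)‖ ^ 2
      = (radialDensity u ‖x‖ + 4 * inner ℝ (deriv v ‖x‖) (u ‖x‖) * x 2) / ‖x‖ ^ 2 := by
  have hr : ‖x‖ ≠ 0 := norm_ne_zero_iff.mpr hx
  have hωx : ω =ᶠ[nhds x] symmetricSpinor u v := (eventually_ne_nhds hx).mono hω
  rw [sigmaGrad, ← sigmaDot, norm_sigmaDot_sq_sub_sum_norm_sq
    ((hasFDerivAt_symmetricSpinor hx hu hv).congr_of_eventuallyEq hωx).fderiv]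
  rw [inner_smul_right, inner_add_left, inner_smul_left, inner_smul_left, inner_spinUp_sigmaUp,
    inner_self_eq_norm_sq_to_K, norm_sigmaUp, norm_smul]
  simp [radialDensity, hr, Complex.inner, div_pow, Complex.sq_norm, normSq_apply]
  field_simp
  ring

lemma indicator_ball_comp_neg {E : Type*} [SeminormedAddCommGroup E] (f : E → ℝ) (R : ℝ) :
    (ball 0 R).indicator (fun x => f (-x)) = fun x => (ball 0 R).indicator f (-x) := by
  funext x
  simp [indicator]

section NegInvariant

variable {E : Type*} [NormedAddCommGroup E] [MeasurableSpace E] [OpensMeasurableSpace E]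
  [MeasurableNeg E] {μ : Measure E} [μ.IsNegInvariant]

lemma setIntegral_ball_comp_neg (f : E → ℝ) (R : ℝ) :
    ∫ x in ball 0 R, f (-x) ∂μ = ∫ x in ball 0 R, f x ∂μ := by
  rw [← integral_indicator measurableSet_ball, ← integral_indicator measurableSet_ball,
    indicator_ball_comp_neg, integral_neg_eq_self _ μ]

lemma integrableOn_ball_comp_neg {f : E → ℝ} {R : ℝ} (hf : IntegrableOn f (ball 0 R) μ) :
    IntegrableOn (fun x => f (-x)) (ball 0 R) μ := by
  rw [← integrable_indicator_iff measurableSet_ball] at hf ⊢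
  rw [indicator_ball_comp_neg]
  exact hf.comp_neg

lemma setIntegral_ball_half_add_neg {f : E → ℝ} {R : ℝ} (hf : IntegrableOn f (ball 0 R) μ) :
    ∫ x in ball 0 R, (f x + f (-x)) / 2 ∂μ = ∫ x in ball 0 R, f x ∂μ := by
  rw [integral_div, integral_add hf (integrableOn_ball_comp_neg hf), setIntegral_ball_comp_neg]
  ring

end NegInvariant

lemma setIntegral_ball_fun_norm_addHaar {E F : Type*} [NormedAddCommGroup E] [NormedSpace ℝ E]
    [Nontrivial E] [FiniteDimensional ℝ E] [MeasurableSpace E] [BorelSpace E] (μ : Measure E)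
    [μ.IsAddHaarMeasure] [NormedAddCommGroup F] [NormedSpace ℝ F] (f : ℝ → F) (R : ℝ) :
    ∫ x in ball (0 : E) R, f ‖x‖ ∂μ = Module.finrank ℝ E • μ.real (ball 0 1) •
      ∫ y in Ioo 0 R, y ^ (Module.finrank ℝ E - 1) • f y := by
  have : (ball (0 : E) R).indicator (fun x => f ‖x‖) = fun x => (Iio R).indicator f ‖x‖ := by
    funext x
    simp [indicator]
  rw [← integral_indicator measurableSet_ball, this, integral_fun_norm_addHaar, ← Ioi_inter_Iio,
    ← setIntegral_indicator measurableSet_Iio]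
  congr 3 with y
  simp [indicator]

lemma hasDerivAt_two_mul_norm_sq {u : ℝ → ℂ} {s : ℝ} (hu : DifferentiableAt ℝ u s) :
    HasDerivAt (fun t => 2 * t * ‖u t‖ ^ 2) (radialDensity u s) s := by
  refine (((hasDerivAt_id s).const_mul 2).mul hu.hasDerivAt.norm_sq).congr_deriv ?_
  simp only [radialDensity, id, mul_one]
  ring

lemma setIntegral_radialDensity_nonneg {u : ℝ → ℂ} (hu : Differentiable ℝ u) (R : ℝ) :
    0 ≤ ∫ s in Ioo 0 R, radialDensity u s := by
  rcases le_or_gt R 0 with hR | hR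
  · simp [Ioo_eq_empty_of_le hR]
  by_cases hint : IntegrableOn (radialDensity u) (Ioo 0 R)
  · rw [← integral_Ioc_eq_integral_Ioo, ← intervalIntegral.integral_of_le hR.le,
      intervalIntegral.integral_eq_sub_of_hasDerivAt (fun s _ => hasDerivAt_two_mul_norm_sq (hu s))
        ((intervalIntegrable_iff_integrableOn_Ioo_of_le hR.le).mpr hint)]
    simp only [mul_zero, zero_mul, sub_zero]
    positivity
  · exact (integral_undef hint).ge

lemma setIntegral_ball_radialDensity_div_sq_nonneg {u : ℝ → ℂ} (hu : Differentiable ℝ u)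
    (R : ℝ) : 0 ≤ ∫ x in ball (0 : R3) R, radialDensity u ‖x‖ / ‖x‖ ^ 2 := by
  rw [setIntegral_ball_fun_norm_addHaar volume (fun s => radialDensity u s / s ^ 2),
    finrank_euclideanSpace_fin,
    setIntegral_congr_fun measurableSet_Ioo (g := radialDensity u) fun s hs => by
      simp only [smul_eq_mul, Nat.reduceSub]
      field_simp [hs.1.ne']]
  exact nsmul_nonneg (smul_nonneg measureReal_nonneg (setIntegral_radialDensity_nonneg hu R)) 3

theorem sigmaGrad_dominates_grad_on_ball_general
    (R : ℝ) (u v : ℝ → ℂ) (ω : R3 → C2)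
    (hω : Differentiable ℝ ω)
    (hform : ∀ x : R3, x ≠ 0 →
      ω x 0 = v ‖x‖ + u ‖x‖ * (((x 2 : ℝ) : ℂ) / (‖x‖ : ℂ)) ∧
      ω x 1 = u ‖x‖ * ((((x 0 : ℝ) : ℂ) + Complex.I * ((x 1 : ℝ) : ℂ)) / (‖x‖ : ℂ)))
    (h1 : IntegrableOn (fun x => ‖sigmaGrad ω x‖ ^ 2) (Metric.ball (0:R3) R) volume)
    (h2 : IntegrableOn
      (fun x => ∑ k : Fin 3, ‖fderiv ℝ ω x (EuclideanSpace.single k 1)‖ ^ 2)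
      (Metric.ball (0:R3) R) volume) :
    (∫ x in Metric.ball (0:R3) R,
        ∑ k : Fin 3, ‖fderiv ℝ ω x (EuclideanSpace.single k 1)‖ ^ 2)
      ≤ ∫ x in Metric.ball (0:R3) R, ‖sigmaGrad ω x‖ ^ 2 := by
  have hsym : ∀ x ≠ 0, ω x = symmetricSpinor u v x := fun x hx => by
    ext j
    fin_cases j <;> simp [symmetricSpinor_apply_zero, symmetricSpinor_apply_one, hform x hx]
  have hray := eq_symmetricSpinor_ray hsym
  set u₀ : ℝ → ℂ := fun s => ω (s • EuclideanSpace.single 0 1) 1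
  set v₀ : ℝ → ℂ := fun s => ω (s • EuclideanSpace.single 0 1) 0
  have hu₀ : Differentiable ℝ u₀ := by fun_prop
  have hv₀ : Differentiable ℝ v₀ := by fun_prop
  rw [← sub_nonneg, ← integral_sub h1 h2]
  set Φ : R3 → ℝ := fun x =>
    ‖sigmaGrad ω x‖ ^ 2 - ∑ k, ‖fderiv ℝ ω x (EuclideanSpace.single k 1)‖ ^ 2
  have hodd : ∀ᵐ x ∂volume.restrict (ball (0 : R3) R),
      (Φ x + Φ (-x)) / 2 = radialDensity u₀ ‖x‖ / ‖x‖ ^ 2 := by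
    filter_upwards [ae_restrict_of_ae (compl_mem_ae_iff.mpr (measure_singleton (0 : R3)))]
      with x (hx : x ≠ 0)
    simp only [Φ]
    rw [norm_sigmaGrad_sq_sub_sum_norm_sq hx (hu₀ _) (hv₀ _) hray,
      norm_sigmaGrad_sq_sub_sum_norm_sq (neg_ne_zero.mpr hx) (hu₀ _) (hv₀ _) hray, norm_neg]
    simp only [PiLp.neg_apply]
    ring
  rw [← setIntegral_ball_half_add_neg (f := Φ) (h1.sub h2), integral_congr_ae hodd]
  exact setIntegral_ball_radialDensity_div_sq_nonneg hu₀ R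

/-- for `ω` of the symmetric form
`ω(x) = v(r)(1,0)ᵀ + u(r)(cos θ, sin θ e^{iφ})ᵀ`,
one has `‖σ·∇ω‖²_{L²(B(0,R))} ≥ ‖∇ω‖²_{L²(B(0,R))}`. -/
theorem sigmaGrad_dominates_grad_on_ball
    (R : ℝ) (hR : 0 < R) (u v : ℝ → ℂ) (ω : R3 → C2)
    (hω : Differentiable ℝ ω)
    (hform : ∀ x : R3, x ≠ 0 →
      ω x 0 = v ‖x‖ + u ‖x‖ * (((x 2 : ℝ) : ℂ) / (‖x‖ : ℂ)) ∧
      ω x 1 = u ‖x‖ * ((((x 0 : ℝ) : ℂ) + Complex.I * ((x 1 : ℝ) : ℂ)) / (‖x‖ : ℂ)))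
    (h1 : IntegrableOn (fun x => ‖sigmaGrad ω x‖ ^ 2) (Metric.ball (0:R3) R) volume)
    (h2 : IntegrableOn
      (fun x => ∑ k : Fin 3, ‖fderiv ℝ ω x (EuclideanSpace.single k 1)‖ ^ 2)
      (Metric.ball (0:R3) R) volume) :
    (∫ x in Metric.ball (0:R3) R,
        ∑ k : Fin 3, ‖fderiv ℝ ω x (EuclideanSpace.single k 1)‖ ^ 2)
      ≤ ∫ x in Metric.ball (0:R3) R, ‖sigmaGrad ω x‖ ^ 2 :=
  sigmaGrad_dominates_grad_on_ball_general R u v ω hω hform h1 h2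
end
end
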